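/- arXiv:1809.06091 — 5 statements merged into one kernel-verified Lean document; each statement's English description precedes it below -/
import Mathlib

section
/- Let H be a complex Hilbert space and let a, b be bounded linear operators on H with 0 ≤ a ≤ b (that is, a is positive and b − a is positive). Then there exists a bounded operator c on H with ‖c‖ ≤ 1 such that a = c b c*. -/
/-!
Since `‖√a x‖² = re ⟪a x, x⟫ ≤ re ⟪b x, x⟫ = ‖√b x‖²`, the assignment `√b x ↦ √a x` is a
well-defined contraction on the range of `√b`. Extend it to the closure of that range and
precompose with the orthogonal projection onto it to get a contraction `c` with `c √b = √a`;
then `a = √a √a* = c √b √b* c* = c b c*` (Douglas' factorization).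
-/

open ContinuousLinearMap

theorem ContinuousLinearMap.exists_norm_le_one_comp_eq_of_norm_apply_le
    {𝕜 E F G : Type*} [RCLike 𝕜] [NormedAddCommGroup E] [NormedSpace 𝕜 E]
    [NormedAddCommGroup F] [InnerProductSpace 𝕜 F] [CompleteSpace F]
    [NormedAddCommGroup G] [NormedSpace 𝕜 G] [CompleteSpace G]
    (A : E →L[𝕜] G) (B : E →L[𝕜] F) (h : ∀ x, ‖A x‖ ≤ ‖B x‖) :
    ∃ C : F →L[𝕜] G, ‖C‖ ≤ 1 ∧ C ∘L B = A := by
  set K := B.range.topologicalClosure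
  have hBK : ∀ x, B x ∈ K := fun x => B.range.le_topologicalClosure (B.mem_range_self x)
  let e : E →ₗ[𝕜] K := (B : E →ₗ[𝕜] F).codRestrict K hBK
  have he_dense : DenseRange e := by
    rw [DenseRange, Subtype.dense_iff, ← Set.range_comp]
    exact B.range.topologicalClosure_coe.le
  have hAe : ∀ x, ‖A x‖ ≤ 1 * ‖e x‖ := fun x => by rw [one_mul]; exact h x
  let D : K →L[𝕜] G := (A : E →ₗ[𝕜] G).extendOfNorm e
  refine ⟨D ∘L K.orthogonalProjectionOnto, ?_, ?_⟩
  · calc ‖D ∘L K.orthogonalProjectionOnto‖ ≤ ‖D‖ * ‖K.orthogonalProjectionOnto‖ :=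
          opNorm_comp_le _ _
      _ ≤ 1 * 1 := by
        gcongr
        · exact LinearMap.opNorm_extendOfNorm_le he_dense zero_le_one hAe
        · exact K.orthogonalProjectionOnto_norm_le
      _ = 1 := one_mul 1
  · ext x
    have hproj : K.orthogonalProjectionOnto (B x) = e x :=
      K.orthogonalProjectionOnto_mem_subspace_eq_self ⟨B x, hBK x⟩
    rw [comp_apply, comp_apply, hproj]
    exact LinearMap.extendOfNorm_eq he_dense ⟨1, hAe⟩ x

section Sqrt

variable {E : Type*} [NormedAddCommGroup E] [InnerProductSpace ℂ E] [CompleteSpace E]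

theorem ContinuousLinearMap.norm_sqrt_apply_sq {a : E →L[ℂ] E} (ha : 0 ≤ a) (x : E) :
    ‖CFC.sqrt a x‖ ^ 2 = RCLike.re (inner ℂ (a x) x) := by
  rw [apply_norm_sq_eq_inner_adjoint_left, ← star_eq_adjoint,
    (CFC.sqrt_nonneg a).isSelfAdjoint.star_eq, ← mul_def, CFC.sqrt_mul_sqrt_self a ha]

theorem ContinuousLinearMap.norm_sqrt_apply_le_of_le {a b : E →L[ℂ] E} (ha : 0 ≤ a) (hab : a ≤ b)
    (x : E) : ‖CFC.sqrt a x‖ ≤ ‖CFC.sqrt b x‖ := by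
  have hba : 0 ≤ RCLike.re (inner ℂ ((b - a) x) x) := hab.re_inner_nonneg_left x
  rw [sub_apply, inner_sub_left, map_sub, sub_nonneg, ← norm_sqrt_apply_sq ha,
    ← norm_sqrt_apply_sq (ha.trans hab)] at hba
  exact (pow_le_pow_iff_left₀ (norm_nonneg _) (norm_nonneg _) two_ne_zero).mp hba

end Sqrt

/-- If `0 ≤ a ≤ b` as bounded operators on a complex Hilbert space (Loewner order),
then there exists a contraction `c` with `a = c b c*`. -/
theorem exists_contraction_conj_of_le {H : Type*} [NormedAddCommGroup H]
    [InnerProductSpace ℂ H] [CompleteSpace H]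
    (a b : H →L[ℂ] H) (ha : 0 ≤ a) (hab : a ≤ b) :
    ∃ c : H →L[ℂ] H, ‖c‖ ≤ 1 ∧
      a = c ∘L b ∘L (ContinuousLinearMap.adjoint c) := by
  obtain ⟨c, hc, hcb⟩ := (CFC.sqrt a).exists_norm_le_one_comp_eq_of_norm_apply_le (CFC.sqrt b)
    (norm_sqrt_apply_le_of_le ha hab)
  have hsqrt_mul_star : ∀ {x : H →L[ℂ] H}, 0 ≤ x → CFC.sqrt x * star (CFC.sqrt x) = x :=
    fun hx => by rw [(CFC.sqrt_nonneg _).isSelfAdjoint.star_eq, CFC.sqrt_mul_sqrt_self _ hx]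
  refine ⟨c, hc, ?_⟩
  calc a = CFC.sqrt a * star (CFC.sqrt a) := (hsqrt_mul_star ha).symm
    _ = c * (CFC.sqrt b * star (CFC.sqrt b)) * star c := by
        rw [← hcb, ← mul_def, star_mul, mul_assoc, mul_assoc, mul_assoc]
    _ = c ∘L b ∘L adjoint c := by rw [hsqrt_mul_star (ha.trans hab), star_eq_adjoint]; rfl
end

section
/- Let H be a complex Hilbert space and let a, b be bounded linear operators on H with 0 ≤ a ≤ b. Then there exists a partial isometry u on H (i.e. u u* u = u) such that a² ≤ u b² u*. -/
/-!
With `x = a^{1/2} b^{1/2}` one has `x x* = a^{1/2} b a^{1/2} ≥ a²` and `x* x = b^{1/2} a b^{1/2} ≤ b²`.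
The polar decomposition `x = u |x|` gives a partial isometry `u` with `x x* = u (x* x) u*`, so
`a² ≤ x x* = u (x* x) u* ≤ u b² u*`.
-/

open ContinuousLinearMap

theorem LinearMap.denseRange_codRestrict_topologicalClosure_range {R M N : Type*} [Semiring R]
    [AddCommMonoid M] [Module R M] [AddCommMonoid N] [Module R N] [TopologicalSpace N]
    [ContinuousAdd N] [ContinuousConstSMul R N] (f : M →ₗ[R] N) :
    DenseRange (f.codRestrict (LinearMap.range f).topologicalClosure
      fun m ↦ Submodule.le_topologicalClosure _ (LinearMap.mem_range_self f m)) := by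
  intro y
  rw [Topology.IsInducing.subtypeVal.closure_eq_preimage_closure_image, ← Set.range_comp]
  change (y : N) ∈ closure (Set.range f)
  rw [← LinearMap.coe_range, ← Submodule.topologicalClosure_coe]
  exact y.2

theorem ContinuousLinearMap.norm_apply_eq_of_adjoint_comp_self_eq {𝕜 E F G : Type*} [RCLike 𝕜]
    [NormedAddCommGroup E] [InnerProductSpace 𝕜 E] [CompleteSpace E]
    [NormedAddCommGroup F] [InnerProductSpace 𝕜 F] [CompleteSpace F]
    [NormedAddCommGroup G] [InnerProductSpace 𝕜 G] [CompleteSpace G]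
    {T : E →L[𝕜] F} {x : E →L[𝕜] G} (h : adjoint T ∘L T = adjoint x ∘L x) (ξ : E) :
    ‖T ξ‖ = ‖x ξ‖ := by
  rw [← sq_eq_sq₀ (norm_nonneg _) (norm_nonneg _), apply_norm_sq_eq_inner_adjoint_left, h,
    ← apply_norm_sq_eq_inner_adjoint_left]

section PartialIsometry

variable {𝕜 E F G : Type*} [RCLike 𝕜]
  [NormedAddCommGroup E] [NormedSpace 𝕜 E]
  [NormedAddCommGroup F] [InnerProductSpace 𝕜 F] [CompleteSpace F]
  [NormedAddCommGroup G] [InnerProductSpace 𝕜 G] [CompleteSpace G]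

def IsPartialIsometry (u : F →L[𝕜] G) : Prop :=
  u ∘L adjoint u ∘L u = u

theorem isPartialIsometry_comp_orthogonalProjectionOnto (K : Submodule 𝕜 F) [CompleteSpace K]
    (v : K →L[𝕜] G) (hv : ∀ y, ‖v y‖ = ‖y‖) :
    IsPartialIsometry (v ∘L K.orthogonalProjectionOnto) := by
  have hP : K.orthogonalProjectionOnto ∘L K.subtypeL = 1 := by
    ext y
    exact congrArg Subtype.val (K.orthogonalProjectionOnto_mem_subspace_eq_self y)
  have hv' : adjoint v ∘L v = 1 := (norm_map_iff_adjoint_comp_self v).mp hv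
  simp only [IsPartialIsometry, adjoint_comp, K.adjoint_orthogonalProjectionOnto]
  calc v ∘L K.orthogonalProjectionOnto ∘L (K.subtypeL ∘L adjoint v) ∘L v ∘L
        K.orthogonalProjectionOnto
      = v ∘L (K.orthogonalProjectionOnto ∘L K.subtypeL) ∘L (adjoint v ∘L v) ∘L
        K.orthogonalProjectionOnto := by simp only [comp_assoc]
    _ = v ∘L K.orthogonalProjectionOnto := by rw [hP, hv', one_def, id_comp, id_comp]

/-- `u` sends `T ξ` to `x ξ` on the range of `T`, extends by continuity to its closure, and
vanishes on the orthogonal complement. -/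
theorem exists_isPartialIsometry_comp_eq_of_norm_apply_eq (T : E →L[𝕜] F) (x : E →L[𝕜] G)
    (hTx : ∀ ξ, ‖x ξ‖ = ‖T ξ‖) : ∃ u : F →L[𝕜] G, IsPartialIsometry u ∧ u ∘L T = x := by
  set K := (LinearMap.range (T : E →ₗ[𝕜] F)).topologicalClosure
  set e : E →ₗ[𝕜] K := (T : E →ₗ[𝕜] F).codRestrict K
    fun ξ ↦ Submodule.le_topologicalClosure _ (LinearMap.mem_range_self _ ξ)
  have he : DenseRange e := (T : E →ₗ[𝕜] F).denseRange_codRestrict_topologicalClosure_range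
  have hbound : ∃ C, ∀ ξ, ‖(x : E →ₗ[𝕜] G) ξ‖ ≤ C * ‖e ξ‖ := ⟨1, fun ξ ↦ by simp [e, hTx]⟩
  set v : K →L[𝕜] G := (x : E →ₗ[𝕜] G).extendOfNorm e
  have hve : ∀ ξ, v (e ξ) = x ξ := LinearMap.extendOfNorm_eq he hbound
  have hv : ∀ y, ‖v y‖ = ‖y‖ := by
    refine he.induction (fun _ ⟨ξ, hξ⟩ ↦ ?_) (isClosed_eq (by fun_prop) continuous_norm)
    rw [← hξ, hve, hTx]
    rfl
  refine ⟨v ∘L K.orthogonalProjectionOnto,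
    isPartialIsometry_comp_orthogonalProjectionOnto K v hv, ext fun ξ ↦ ?_⟩
  rw [comp_apply, comp_apply, ← hve]
  exact congrArg v (K.orthogonalProjectionOnto_mem_subspace_eq_self (e ξ))

end PartialIsometry

section StarOrderedRing

variable {R : Type*} [Ring R] [PartialOrder R] [StarRing R] [StarOrderedRing R]

theorem mul_self_le_conjugate_of_mul_self_eq {s a b : R} (hs : IsSelfAdjoint s) (hsa : s * s = a)
    (hab : a ≤ b) : a * a ≤ s * b * s := by
  subst hsa
  calc s * s * (s * s) = s * (s * s) * s := by noncomm_ring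
    _ ≤ s * b * s := hs.conjugate_le_conjugate hab

theorem conjugate_le_mul_self_of_mul_self_eq {s a b : R} (hs : IsSelfAdjoint s) (hsb : s * s = b)
    (hab : a ≤ b) : s * a * s ≤ b * b := by
  subst hsb
  calc s * a * s ≤ s * (s * s) * s := hs.conjugate_le_conjugate hab
    _ = s * s * (s * s) := by noncomm_ring

end StarOrderedRing

section Polar

variable {H : Type*} [NormedAddCommGroup H] [InnerProductSpace ℂ H] [CompleteSpace H]

theorem ContinuousLinearMap.exists_isPartialIsometry_mul_abs_eq (x : H →L[ℂ] H) :
    ∃ u : H →L[ℂ] H, IsPartialIsometry u ∧ u * CFC.abs x = x := by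
  have habs : adjoint (CFC.abs x) ∘L CFC.abs x = adjoint x ∘L x := by
    have h := CFC.abs_mul_abs x
    nth_rewrite 1 [← (CFC.abs_nonneg x).isSelfAdjoint.star_eq] at h
    exact h
  exact exists_isPartialIsometry_comp_eq_of_norm_apply_eq _ x fun ξ ↦
    (norm_apply_eq_of_adjoint_comp_self_eq habs ξ).symm

theorem ContinuousLinearMap.exists_isPartialIsometry_conj_star_mul_self_eq (x : H →L[ℂ] H) :
    ∃ u : H →L[ℂ] H, IsPartialIsometry u ∧ u * (star x * x) * star u = x * star x := by
  obtain ⟨u, hu, hux⟩ := x.exists_isPartialIsometry_mul_abs_eq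
  refine ⟨u, hu, ?_⟩
  calc u * (star x * x) * star u = u * (CFC.abs x * CFC.abs x) * star u := by
        rw [CFC.abs_mul_abs]
    _ = (u * CFC.abs x) * star (u * CFC.abs x) := by
        rw [star_mul, (CFC.abs_nonneg x).isSelfAdjoint.star_eq]; noncomm_ring
    _ = x * star x := by rw [hux]

end Polar

/-- If `0 ≤ a ≤ b` as bounded operators on a complex Hilbert space (Loewner order),
then there exists a partial isometry `u` with `a² ≤ u b² u*`. -/
theorem exists_partialIsometry_sq_le_conj_sq {H : Type*} [NormedAddCommGroup H]
    [InnerProductSpace ℂ H] [CompleteSpace H]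
    (a b : H →L[ℂ] H) (ha : 0 ≤ a) (hab : a ≤ b) :
    ∃ u : H →L[ℂ] H, u ∘L (ContinuousLinearMap.adjoint u) ∘L u = u ∧
      a ∘L a ≤ u ∘L (b ∘L b) ∘L (ContinuousLinearMap.adjoint u) := by
  obtain ⟨s, hs, hsa⟩ : ∃ s : H →L[ℂ] H, IsSelfAdjoint s ∧ s * s = a :=
    ⟨CFC.sqrt a, (CFC.sqrt_nonneg a).isSelfAdjoint, CFC.sqrt_mul_sqrt_self a ha⟩
  obtain ⟨t, ht, htb⟩ : ∃ t : H →L[ℂ] H, IsSelfAdjoint t ∧ t * t = b :=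
    ⟨CFC.sqrt b, (CFC.sqrt_nonneg b).isSelfAdjoint, CFC.sqrt_mul_sqrt_self b (ha.trans hab)⟩
  have hstar : star (s * t) = t * s := by rw [star_mul, hs.star_eq, ht.star_eq]
  obtain ⟨u, hu, hconj⟩ := (s * t).exists_isPartialIsometry_conj_star_mul_self_eq
  refine ⟨u, hu, ?_⟩
  calc a * a ≤ s * b * s := mul_self_le_conjugate_of_mul_self_eq hs hsa hab
    _ = (s * t) * star (s * t) := by rw [hstar, ← htb]; noncomm_ring
    _ = u * (t * a * t) * star u := by rw [← hconj, hstar, ← hsa]; noncomm_ring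
    _ ≤ u * (b * b) * star u :=
        star_right_conjugate_le_conjugate (conjugate_le_mul_self_of_mul_self_eq ht htb hab) u
end

section
/- Let f : ℝ → ℝ be measurable, bounded and integrable with respect to Lebesgue measure λ, and let t > 0. Then sup { ∫_E |f| dλ : E ⊆ ℝ measurable, λ(E) ≤ t } = inf { ‖g‖_{L¹} + t·‖h‖_{L^∞} : g integrable, h essentially bounded, f = g + h λ-a.e. }. -/
/-!
Writing `f = g + h` and integrating over `E` gives `∫_E |f| ≤ ‖g‖₁ + λ(E) ‖h‖_∞`, hence `≤`.
Conversely, truncating `f` at a level `c ≥ 0` (`h = max (-c) (min c f)`, `g = f - h`) costs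
`∫ (|f| - c)⁺ + t c`. For the least `c` with `λ{|f| > c} ≤ t` (the decreasing rearrangement
`f*(t)`) one has `λ{|f| > c} ≤ t ≤ λ{|f| ≥ c}` when `c > 0`, and since Lebesgue measure takes all
intermediate values on subsets, some `E` squeezed between these level sets has measure `t`.
On it `∫_E |f| = ∫ (|f| - c)⁺ + t c`.
-/

open MeasureTheory Set Filter Topology ENNReal

theorem Real.exists_subset_volume_eq {s : Set ℝ} (hs : MeasurableSet s) (hfin : volume s ≠ ∞)
    {r : ℝ≥0∞} (hr : r ≤ volume s) : ∃ F ⊆ s, MeasurableSet F ∧ volume F = r := by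
  rcases hr.eq_or_lt with rfl | hr_lt
  · exact ⟨s, subset_rfl, hs, rfl⟩
  rcases eq_zero_or_pos r with rfl | hr_pos
  · exact ⟨∅, empty_subset _, .empty, measure_empty⟩
  let μ := volume.restrict s
  have : IsFiniteMeasure μ := isFiniteMeasure_restrict.2 hfin
  have hcont : Continuous fun u ↦ μ.real (Iic u) := by
    refine (LipschitzWith.of_le_add_mul 1 fun u v ↦ ?_).continuous
    calc μ.real (Iic u) ≤ μ.real (Iic v ∪ Ioc v u) := measureReal_mono Iic_subset_Iic_union_Ioc
      _ ≤ μ.real (Iic v) + volume.real (Ioc v u) :=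
        (measureReal_union_le _ _).trans
          (by gcongr; exact toReal_mono measure_Ioc_lt_top.ne (Measure.restrict_apply_le _ _))
      _ ≤ μ.real (Iic v) + 1 * dist u v := by
        rw [Real.volume_real_Ioc, Real.dist_eq, one_mul]
        gcongr
        exact max_le (le_abs_self _) (abs_nonneg _)
  have hbot : Tendsto (fun u ↦ μ.real (Iic u)) atBot (𝓝 0) := by
    have := tendsto_measure_iInter_atBot (μ := μ) (fun _ ↦ measurableSet_Iic.nullMeasurableSet)
      monotone_Iic ⟨0, measure_ne_top _ _⟩
    rw [iInter_Iic_eq_empty_iff.2 (by simp), measure_empty] at this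
    exact (ENNReal.tendsto_toReal zero_ne_top).comp this
  have htop : Tendsto (fun u ↦ μ.real (Iic u)) atTop (𝓝 (volume s).toReal) := by
    have := (ENNReal.tendsto_toReal (measure_ne_top μ univ)).comp (tendsto_measure_Iic_atTop μ)
    rwa [Measure.restrict_apply_univ] at this
  have hr_fin : r ≠ ∞ := (hr_lt.trans_le le_top).ne
  obtain ⟨c, hc⟩ := intermediate_value_univ₂_eventually₂ hcont continuous_const
    ((hbot.eventually (gt_mem_nhds (toReal_pos hr_pos.ne' hr_fin))).mono fun _ ↦ le_of_lt)
    ((htop.eventually (lt_mem_nhds (toReal_strict_mono hfin hr_lt))).mono fun _ ↦ le_of_lt)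
  refine ⟨s ∩ Iic c, inter_subset_left, hs.inter measurableSet_Iic, ?_⟩
  rwa [measureReal_def, Measure.restrict_apply measurableSet_Iic, inter_comm,
    toReal_eq_toReal_iff' ((measure_mono inter_subset_left).trans_lt hfin.lt_top).ne hr_fin] at hc

theorem Real.exists_measurableSet_between_volume_eq {A B : Set ℝ} (hA : MeasurableSet A)
    (hB : MeasurableSet B) (hAB : A ⊆ B) (hBfin : volume B ≠ ∞) {r : ℝ≥0∞}
    (hAr : volume A ≤ r) (hrB : r ≤ volume B) :
    ∃ E, MeasurableSet E ∧ A ⊆ E ∧ E ⊆ B ∧ volume E = r := by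
  have hAfin : volume A ≠ ∞ := ne_top_of_le_ne_top hBfin (measure_mono hAB)
  obtain ⟨F, hFB, hF, hFr⟩ := exists_subset_volume_eq (hB.diff hA)
    (ne_top_of_le_ne_top hBfin (measure_mono sdiff_subset)) (r := r - volume A)
    (by rw [measure_sdiff hAB hA.nullMeasurableSet hAfin]; exact tsub_le_tsub_right hrB _)
  refine ⟨A ∪ F, hA.union hF, subset_union_left, union_subset hAB (hFB.trans sdiff_subset), ?_⟩
  rw [measure_union (disjoint_sdiff_right.mono_right hFB) hF, hFr, add_tsub_cancel_of_le hAr]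

theorem abs_sub_max_neg_min {c : ℝ} (hc : 0 ≤ c) (a : ℝ) :
    |a - max (-c) (min c a)| = max (|a| - c) 0 := by
  grind

section

variable {α : Type*} [MeasurableSpace α] {μ : Measure α} {φ : α → ℝ} {r : ℝ≥0∞}

theorem measure_lt_le_of_forall_gt {c : ℝ} (h : ∀ c' > c, μ {x | c' < φ x} ≤ r) :
    μ {x | c < φ x} ≤ r := by
  obtain ⟨u, hu_anti, hcu, hu⟩ := exists_seq_strictAnti_tendsto c
  have hunion : {x | c < φ x} = ⋃ n, {x | u n < φ x} := by
    ext x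
    simp only [mem_ofPred_eq, mem_iUnion]
    exact ⟨fun hx ↦ (hu.eventually (gt_mem_nhds hx)).exists, fun ⟨n, hn⟩ ↦ (hcu n).trans hn⟩
  have hmono : Monotone fun n ↦ {x | u n < φ x} := fun m n hmn x hx ↦
    (hu_anti.antitone hmn).trans_lt hx
  rw [hunion, hmono.measure_iUnion]
  exact iSup_le fun n ↦ h _ (hcu n)

theorem le_measure_le_of_forall_lt (hφ : AEMeasurable φ μ) {a c : ℝ} (hac : a < c)
    (hfin : μ {x | a < φ x} ≠ ∞) (h : ∀ c' ∈ Ioo a c, r ≤ μ {x | c' < φ x}) :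
    r ≤ μ {x | c ≤ φ x} := by
  obtain ⟨u, hu_mono, hu_mem, hu⟩ := exists_seq_strictMono_tendsto' hac
  have hinter : {x | c ≤ φ x} = ⋂ n, {x | u n < φ x} := by
    ext x
    simp only [mem_ofPred_eq, mem_iInter]
    exact ⟨fun hx n ↦ (hu_mem n).2.trans_le hx, fun hx ↦ le_of_tendsto' hu fun n ↦ (hx n).le⟩
  have hanti : Antitone fun n ↦ {x | u n < φ x} := fun m n hmn x hx ↦
    (hu_mono.monotone hmn).trans_lt hx
  rw [hinter, hanti.measure_iInter (fun _ ↦ nullMeasurableSet_lt aemeasurable_const hφ)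
    ⟨0, ne_top_of_le_ne_top hfin (measure_mono fun x hx ↦ (hu_mem 0).1.trans hx)⟩]
  exact le_iInf fun n ↦ h _ (hu_mem n)

theorem tendsto_measure_lt_atTop (hφ : AEMeasurable φ μ) (hfin : ∃ c, μ {x | c < φ x} ≠ ∞) :
    Tendsto (fun c ↦ μ {x | c < φ x}) atTop (𝓝 0) := by
  have := tendsto_measure_iInter_atTop (μ := μ) (s := fun c ↦ {x | c < φ x})
    (fun _ ↦ nullMeasurableSet_lt aemeasurable_const hφ) (fun a b hab x hx ↦ hab.trans_lt hx) hfin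
  rwa [show ⋂ c, {x | c < φ x} = ∅ from ?_, measure_empty] at this
  ext x
  simpa using ⟨φ x, le_rfl⟩

theorem exists_level_measure_lt_le_le_measure_le (hφ : AEMeasurable φ μ)
    (hfin : ∀ c > 0, μ {x | c < φ x} ≠ ∞) (hr : r ≠ 0) :
    ∃ c, 0 ≤ c ∧ μ {x | c < φ x} ≤ r ∧ (0 < c → r ≤ μ {x | c ≤ φ x}) := by
  set S := {c | 0 ≤ c ∧ μ {x | c < φ x} ≤ r}
  have hS_bdd : BddBelow S := ⟨0, fun c hc ↦ hc.1⟩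
  have hS_ne : S.Nonempty :=
    (((tendsto_measure_lt_atTop hφ ⟨1, hfin 1 one_pos⟩).eventually
      (gt_mem_nhds (pos_iff_ne_zero.2 hr))).and (eventually_ge_atTop 0)).exists.imp
      fun c hc ↦ ⟨hc.2, hc.1.le⟩
  refine ⟨sInf S, le_csInf hS_ne fun c hc ↦ hc.1, ?_, fun hpos ↦ ?_⟩
  · refine measure_lt_le_of_forall_gt fun c' hc' ↦ ?_
    obtain ⟨c, hcS, hcc'⟩ := exists_lt_of_csInf_lt hS_ne hc'
    exact (measure_mono fun x hx ↦ hcc'.trans hx).trans hcS.2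
  · obtain ⟨a, ha, haS⟩ := exists_between hpos
    refine le_measure_le_of_forall_lt hφ haS (hfin a ha) fun c' hc' ↦ ?_
    by_contra! hlt
    exact (csInf_le hS_bdd ⟨ha.le.trans hc'.1.le, hlt.le⟩).not_gt hc'.2

theorem setIntegral_eq_integral_max_sub_add (hφ : Integrable φ μ) {c : ℝ} {E : Set α}
    (hE : MeasurableSet E) (hE_fin : μ E ≠ ∞) (hlt : {x | c < φ x} ⊆ E)
    (hle : E ⊆ {x | c ≤ φ x}) :
    ∫ x in E, φ x ∂μ = ∫ x, max (φ x - c) 0 ∂μ + c * μ.real E := by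
  have hmax : ∫ x, max (φ x - c) 0 ∂μ = ∫ x in E, (φ x - c) ∂μ := by
    rw [← setIntegral_eq_integral_of_forall_compl_eq_zero (s := E)
      fun x hx ↦ max_eq_right (sub_nonpos.2 (not_lt.1 fun h ↦ hx (hlt h)))]
    exact setIntegral_congr_fun hE fun x hx ↦ max_eq_left (sub_nonneg.2 (hle hx))
  rw [hmax, integral_sub hφ.integrableOn (integrableOn_const hE_fin), setIntegral_const,
    smul_eq_mul]
  ring

theorem setIntegral_abs_le_of_ae_eq_add {f g h : α → ℝ} {E : Set α} {t : ℝ} (ht : 0 ≤ t)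
    (hE : μ E ≤ ENNReal.ofReal t) (hg : Integrable g μ) (hh : MemLp h ⊤ μ)
    (hfgh : f =ᵐ[μ] g + h) :
    ∫ x in E, |f x| ∂μ ≤ ∫ x, |g x| ∂μ + t * (eLpNorm h ⊤ μ).toReal := by
  set M := (eLpNorm h ⊤ μ).toReal
  have hE_fin : μ E ≠ ∞ := (hE.trans_lt ofReal_lt_top).ne
  have hhM : ∀ᵐ x ∂μ, |h x| ≤ M := by
    simpa only [M, toReal_eLpNorm hh.1, Real.norm_eq_abs] using ae_le_lpNorm_exponent_top hh
  calc ∫ x in E, |f x| ∂μ ≤ ∫ x in E, (|g x| + M) ∂μ := by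
        refine integral_mono_of_nonneg (ae_of_all _ fun _ ↦ abs_nonneg _)
          (hg.abs.integrableOn.add (integrableOn_const hE_fin)) ?_
        filter_upwards [ae_restrict_of_ae hfgh, ae_restrict_of_ae hhM] with x hfx hhx
        rw [hfx, Pi.add_apply]
        exact (abs_add_le _ _).trans (by gcongr)
    _ = ∫ x in E, |g x| ∂μ + μ.real E * M := by
        rw [integral_add hg.abs.integrableOn (integrableOn_const hE_fin), setIntegral_const,
          smul_eq_mul]
    _ ≤ ∫ x, |g x| ∂μ + t * M := by
        refine add_le_add (setIntegral_le_integral hg.abs (ae_of_all _ fun _ ↦ abs_nonneg _)) ?_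
        exact mul_le_mul_of_nonneg_right (toReal_le_of_le_ofReal ht hE) toReal_nonneg

theorem MeasureTheory.Integrable.exists_ae_eq_add_truncation {f : α → ℝ}
    (hf : Integrable f μ) {c : ℝ} (hc : 0 ≤ c) :
    ∃ g h : α → ℝ, Integrable g μ ∧ MemLp h ⊤ μ ∧ f =ᵐ[μ] g + h ∧
      ∫ x, |g x| ∂μ = ∫ x, max (|f x| - c) 0 ∂μ ∧ (eLpNorm h ⊤ μ).toReal ≤ c := by
  set h : α → ℝ := fun x ↦ max (-c) (min c (f x))
  have hh_bound : ∀ x, ‖h x‖ ≤ c := fun x ↦ by simp only [h, Real.norm_eq_abs]; grind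
  have hh_meas : AEStronglyMeasurable h μ :=
    (continuous_const.max (continuous_const.min continuous_id)).comp_aestronglyMeasurable hf.1
  have hg_abs : ∀ x, |(f - h) x| = max (|f x| - c) 0 := fun x ↦ abs_sub_max_neg_min hc (f x)
  refine ⟨f - h, h, hf.mono (hf.1.sub hh_meas) (ae_of_all _ fun x ↦ ?_),
    memLp_top_of_bound hh_meas c (ae_of_all _ hh_bound), ae_of_all _ fun x ↦ by simp,
    by simp_rw [hg_abs], ?_⟩
  · simp only [Real.norm_eq_abs, hg_abs]
    grind
  · rw [eLpNorm_exponent_top]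
    exact toReal_le_of_le_ofReal hc (eLpNormEssSup_le_of_ae_bound (ae_of_all _ hh_bound))

end

theorem exists_setIntegral_abs_eq_integral_max_sub_add {f : ℝ → ℝ} (hf_meas : Measurable f)
    (hf_int : Integrable f) {t : ℝ} (ht : 0 < t) :
    ∃ c, 0 ≤ c ∧ ∃ E, MeasurableSet E ∧ volume E ≤ ENNReal.ofReal t ∧
      ∫ x in E, |f x| = (∫ x, max (|f x| - c) 0) + t * c := by
  obtain ⟨c, hc, hlt, hle⟩ := exists_level_measure_lt_le_le_measure_le
    hf_meas.abs.aemeasurable (fun c hc ↦ (hf_int.measure_norm_gt_lt_top hc).ne)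
    (ofReal_pos.2 ht).ne'
  have hA : MeasurableSet {x | c < |f x|} := measurableSet_lt measurable_const hf_meas.abs
  have hB : MeasurableSet {x | c ≤ |f x|} := measurableSet_le measurable_const hf_meas.abs
  obtain ⟨E, hE, hAE, hEB, hEt, hcE⟩ : ∃ E, MeasurableSet E ∧ {x | c < |f x|} ⊆ E ∧
      E ⊆ {x | c ≤ |f x|} ∧ volume E ≤ ENNReal.ofReal t ∧ c * volume.real E = c * t := by
    rcases hc.eq_or_lt with rfl | hpos
    · exact ⟨_, hA, subset_rfl, ofPred_subset_ofPred.2 fun _ ↦ le_of_lt, hlt, by simp⟩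
    · obtain ⟨E, hE, hAE, hEB, hEt⟩ := Real.exists_measurableSet_between_volume_eq hA hB
        (ofPred_subset_ofPred.2 fun _ ↦ le_of_lt) (hf_int.measure_norm_ge_lt_top hpos).ne hlt
        (hle hpos)
      exact ⟨E, hE, hAE, hEB, hEt.le, by rw [measureReal_def, hEt, toReal_ofReal ht.le]⟩
  refine ⟨c, hc, E, hE, hEt, ?_⟩
  rw [setIntegral_eq_integral_max_sub_add hf_int.abs hE (ne_top_of_le_ne_top ofReal_ne_top hEt)
    hAE hEB, hcE, mul_comm]

theorem kFunctional_L1_Linfty_eq_sSup_general (f : ℝ → ℝ) (hf_meas : Measurable f)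
    (hf_int : Integrable f (volume : Measure ℝ))
    (t : ℝ) (ht : 0 < t) :
    sSup {r : ℝ | ∃ E : Set ℝ, MeasurableSet E ∧ volume E ≤ ENNReal.ofReal t ∧
        r = ∫ x in E, |f x|} =
      sInf {r : ℝ | ∃ g h : ℝ → ℝ, Integrable g (volume : Measure ℝ) ∧
        MemLp h ⊤ (volume : Measure ℝ) ∧ f =ᵐ[(volume : Measure ℝ)] g + h ∧
        r = (∫ x, |g x|) + t * (eLpNorm h ⊤ (volume : Measure ℝ)).toReal} := by
  refine le_antisymm (csSup_le ⟨0, ∅, .empty, by simp, by simp⟩ ?_) ?_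
  · rintro _ ⟨E, -, hE, rfl⟩
    refine le_csInf ⟨_, f, 0, hf_int, .zero, by simp, rfl⟩ ?_
    rintro _ ⟨g, h, hg, hh, hfgh, rfl⟩
    exact setIntegral_abs_le_of_ae_eq_add ht.le hE hg hh hfgh
  · obtain ⟨c, hc, E, hE, hEt, hfE⟩ :=
      exists_setIntegral_abs_eq_integral_max_sub_add hf_meas hf_int ht
    obtain ⟨g, h, hg, hh, hfgh, hg_int, hh_norm⟩ := hf_int.exists_ae_eq_add_truncation hc
    refine le_trans (csInf_le ⟨0, ?_⟩ ⟨g, h, hg, hh, hfgh, rfl⟩)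
      (le_trans ?_ (le_csSup ⟨∫ x, |f x|, ?_⟩ ⟨E, hE, hEt, rfl⟩))
    · rintro _ ⟨g, h, -, -, -, rfl⟩
      positivity
    · rw [hfE, hg_int]
      gcongr
    · rintro _ ⟨E, -, -, rfl⟩
      exact setIntegral_le_integral hf_int.abs (ae_of_all _ fun _ ↦ abs_nonneg _)

/-- For an integrable, bounded, measurable `f : ℝ → ℝ` and `t > 0`, the supremum of
`∫_E |f|` over measurable sets `E` of Lebesgue measure at most `t` equals the
K-functional `K_t(f, L¹, L^∞) = inf { ‖g‖₁ + t‖h‖_∞ : f = g + h a.e. }`. -/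
theorem kFunctional_L1_Linfty_eq_sSup (f : ℝ → ℝ) (hf_meas : Measurable f)
    (hf_bdd : ∃ C : ℝ, ∀ x, |f x| ≤ C) (hf_int : Integrable f (volume : Measure ℝ))
    (t : ℝ) (ht : 0 < t) :
    sSup {r : ℝ | ∃ E : Set ℝ, MeasurableSet E ∧ volume E ≤ ENNReal.ofReal t ∧
        r = ∫ x in E, |f x|} =
      sInf {r : ℝ | ∃ g h : ℝ → ℝ, Integrable g (volume : Measure ℝ) ∧
        MemLp h ⊤ (volume : Measure ℝ) ∧ f =ᵐ[(volume : Measure ℝ)] g + h ∧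
        r = (∫ x, |g x|) + t * (eLpNorm h ⊤ (volume : Measure ℝ)).toReal} :=
  kFunctional_L1_Linfty_eq_sSup_general f hf_meas hf_int t ht
end

section
/- Let N ≥ 1, p ∈ [1,2], and let a, b be complex N×N matrices. Then (‖a − b‖_p^p + ‖a + b‖_p^p)/2 ≤ ‖a‖_p^p + ‖b‖_p^p, where ‖x‖_p^p = Tr((xᴴx)^{p/2}). -/
/-!
Put `q = p / 2 ∈ (0, 1]`, `A = aᴴa`, `B = bᴴb`, so that
`(a - b)ᴴ(a - b) + (a + b)ᴴ(a + b) = 2 (A + B)`. Operator concavity of `x ↦ x ^ q` bounds the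
left-hand side of the inequality by `Tr (A + B) ^ q`, and it remains to show
`Tr (A + B) ^ q ≤ Tr A ^ q + Tr B ^ q`.
Since `x ^ q = ∫ t ^ (q - 1) x / (t + x) dμ(t)`, it suffices to prove this for each
`x ↦ x / (t + x)`, and there it reads
`Tr A (t + A + B)⁻¹ + Tr B (t + A + B)⁻¹ ≤ Tr A (t + A)⁻¹ + Tr B (t + B)⁻¹`,
which holds because inversion is operator antitone.
-/

open Matrix

/-- `‖x‖_p^p = Tr((xᴴx)^(p/2))` for a complex `N×N` matrix, the matrix power being given
by the continuous functional calculus. -/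
noncomputable def schattenPowP {N : ℕ} (p : ℝ) (x : Matrix (Fin N) (Fin N) ℂ) : ℝ :=
  ((cfc (fun t : ℝ => t ^ (p / 2)) (xᴴ * x)).trace).re

open scoped Matrix.Norms.L2Operator MatrixOrder ComplexOrder
open MeasureTheory Set

namespace Real

lemma sum_rpow_eq_setIntegral {q : ℝ} (hq : q ∈ Ioo 0 1) {μ : Measure ℝ}
    (hμ : ∀ x ∈ Ici 0, IntegrableOn (fun t ↦ rpowIntegrand₀₁ q t x) (Ioi 0) μ ∧
      x ^ q = ∫ t in Ioi 0, rpowIntegrand₀₁ q t x ∂μ)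
    {ι : Type*} [Fintype ι] {x : ι → ℝ} (hx : ∀ i, 0 ≤ x i) :
    IntegrableOn (fun t ↦ t ^ (q - 1) * ∑ i, x i / (t + x i)) (Ioi 0) μ ∧
      ∑ i, x i ^ q = ∫ t in Ioi 0, t ^ (q - 1) * ∑ i, x i / (t + x i) ∂μ := by
  have heq : EqOn (fun t ↦ ∑ i, rpowIntegrand₀₁ q t (x i))
      (fun t ↦ t ^ (q - 1) * ∑ i, x i / (t + x i)) (Ioi 0) := fun t ht ↦ by
    simp only [Finset.mul_sum, rpowIntegrand₀₁_eq_pow_div hq (le_of_lt ht) (hx _), mul_div_assoc]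
  have hint : IntegrableOn (fun t ↦ ∑ i, rpowIntegrand₀₁ q t (x i)) (Ioi 0) μ :=
    integrable_finsetSum _ fun i _ ↦ (hμ (x i) (hx i)).1
  refine ⟨hint.congr_fun heq measurableSet_Ioi, ?_⟩
  rw [← setIntegral_congr_fun measurableSet_Ioi heq,
    integral_finsetSum _ fun i _ ↦ (hμ (x i) (hx i)).1]
  exact Finset.sum_congr rfl fun i _ ↦ (hμ (x i) (hx i)).2

lemma sum_rpow_le_sum_rpow_of_sum_div_const_add_le {ι κ : Type*} [Fintype ι] [Fintype κ]
    {q : ℝ} (hq : q ∈ Ioo 0 1) {x : ι → ℝ} {y : κ → ℝ} (hx : ∀ i, 0 ≤ x i) (hy : ∀ j, 0 ≤ y j)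
    (h : ∀ t, 0 < t → ∑ i, x i / (t + x i) ≤ ∑ j, y j / (t + y j)) :
    ∑ i, x i ^ q ≤ ∑ j, y j ^ q := by
  obtain ⟨μ, hμ⟩ := exists_measure_rpow_eq_integral_rpowIntegrand₀₁ hq
  obtain ⟨hxint, hxeq⟩ := sum_rpow_eq_setIntegral hq hμ hx
  obtain ⟨hyint, hyeq⟩ := sum_rpow_eq_setIntegral hq hμ hy
  rw [hxeq, hyeq]
  exact setIntegral_mono_on hxint hyint measurableSet_Ioi fun t ht ↦
    mul_le_mul_of_nonneg_left (h t ht) (rpow_nonneg (le_of_lt ht) _)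

end Real

namespace Matrix

variable {n : Type*} [Fintype n]

lemma re_trace_le_re_trace {X Y : Matrix n n ℂ} (h : X ≤ Y) : X.trace.re ≤ Y.trace.re := by
  have := (le_iff.mp h).trace_nonneg
  rw [trace_sub, sub_nonneg] at this
  exact (Complex.le_def.mp this).1

variable [DecidableEq n]

lemma concaveOn_re_trace_rpow {q : ℝ} (hq : q ∈ Icc 0 1) :
    ConcaveOn ℝ (Ici (0 : Matrix n n ℂ)) (fun C ↦ (C ^ q).trace.re) := by
  refine ⟨convex_Ici 0, fun C₁ hC₁ C₂ hC₂ a b ha hb hab ↦ ?_⟩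
  have h := re_trace_le_re_trace <| (CFC.concaveOn_rpow hq).2 hC₁ hC₂ ha hb hab
  simpa only [trace_add, trace_smul, Complex.add_re, Complex.real_smul, Complex.re_ofReal_mul,
    smul_eq_mul] using h

lemma re_trace_mul_nonneg {A X : Matrix n n ℂ} (hA : 0 ≤ A) (hX : 0 ≤ X) :
    0 ≤ (A * X).trace.re := by
  obtain ⟨y, rfl⟩ := CStarAlgebra.nonneg_iff_eq_star_mul_self.mp hA
  rw [mul_assoc, trace_mul_comm, star_eq_conjTranspose]
  exact (Complex.nonneg_iff.mp
    ((nonneg_iff_posSemidef.mp hX).mul_mul_conjTranspose_same y).trace_nonneg).1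

lemma IsHermitian.re_trace_cfc {M : Matrix n n ℂ} (hM : M.IsHermitian) (f : ℝ → ℝ) :
    (cfc f M).trace.re = ∑ i, f (hM.eigenvalues i) := by
  rw [hM.cfc_eq, IsHermitian.cfc, Unitary.conjStarAlgAut_apply, trace_mul_cycle,
    Unitary.coe_star_mul_self, one_mul, trace_diagonal, Complex.re_sum]
  simp

lemma cfc_div_const_add {M : Matrix n n ℂ} (hM : 0 ≤ M) {t : ℝ} (ht : 0 < t) :
    cfc (fun x : ℝ => x / (t + x)) M = M * Ring.inverse (algebraMap ℝ _ t + M) := by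
  have hspec : ∀ x ∈ spectrum ℝ M, t + x ≠ 0 := fun x hx ↦
    (add_pos_of_pos_of_nonneg ht (spectrum_nonneg_of_nonneg hM hx)).ne'
  have hcont : ContinuousOn (fun x : ℝ => (t + x)⁻¹) (spectrum ℝ M) :=
    (continuousOn_const.add continuousOn_id).inv₀ hspec
  simp_rw [div_eq_mul_inv]
  rw [cfc_mul (fun x => x) _ M (continuousOn_id' _) hcont, cfc_id' ℝ M, cfc_inv _ _ hspec,
    cfc_const_add t (fun x => x) M, cfc_id' ℝ M]

lemma re_trace_mul_ringInverse_le {A S : Matrix n n ℂ} (hA : 0 ≤ A) (hAS : A ≤ S) {t : ℝ}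
    (ht : 0 < t) :
    (A * Ring.inverse (algebraMap ℝ _ t + S)).trace.re ≤
      (A * Ring.inverse (algebraMap ℝ _ t + A)).trace.re := by
  have hpos : IsStrictlyPositive (algebraMap ℝ (Matrix n n ℂ) t + A) :=
    (isStrictlyPositive_algebraMap ht).add_nonneg hA
  have hinv := CStarAlgebra.ringInverse_le_ringInverse (add_le_add_right hAS _) hpos
  have := re_trace_mul_nonneg hA (sub_nonneg.mpr hinv)
  rwa [mul_sub, trace_sub, Complex.sub_re, sub_nonneg] at this

lemma re_trace_cfc_div_const_add_add_le {A B : Matrix n n ℂ} (hA : 0 ≤ A) (hB : 0 ≤ B) {t : ℝ}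
    (ht : 0 < t) :
    (cfc (fun x : ℝ => x / (t + x)) (A + B)).trace.re ≤
      (cfc (fun x : ℝ => x / (t + x)) A).trace.re +
        (cfc (fun x : ℝ => x / (t + x)) B).trace.re := by
  rw [cfc_div_const_add (add_nonneg hA hB) ht, cfc_div_const_add hA ht, cfc_div_const_add hB ht,
    add_mul, trace_add, Complex.add_re]
  exact add_le_add (re_trace_mul_ringInverse_le hA (le_add_of_nonneg_right hB) ht)
    (re_trace_mul_ringInverse_le hB (le_add_of_nonneg_left hA) ht)

lemma re_trace_rpow_add_le {A B : Matrix n n ℂ} (hA : 0 ≤ A) (hB : 0 ≤ B) {q : ℝ} (hq₀ : 0 < q)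
    (hq₁ : q ≤ 1) : ((A + B) ^ q).trace.re ≤ (A ^ q).trace.re + (B ^ q).trace.re := by
  rcases hq₁.eq_or_lt with rfl | hq₁
  · simp [CFC.rpow_one _ hA, CFC.rpow_one _ hB, CFC.rpow_one _ (add_nonneg hA hB)]
  have hS := add_nonneg hA hB
  have hA' := nonneg_iff_posSemidef.mp hA
  have hB' := nonneg_iff_posSemidef.mp hB
  have hS' := nonneg_iff_posSemidef.mp hS
  simp only [CFC.rpow_eq_cfc_real hA, CFC.rpow_eq_cfc_real hB, CFC.rpow_eq_cfc_real hS,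
    hA'.isHermitian.re_trace_cfc, hB'.isHermitian.re_trace_cfc, hS'.isHermitian.re_trace_cfc]
  have hresolvent (t : ℝ) (ht : 0 < t) := re_trace_cfc_div_const_add_add_le hA hB ht
  simp only [hA'.isHermitian.re_trace_cfc, hB'.isHermitian.re_trace_cfc,
    hS'.isHermitian.re_trace_cfc] at hresolvent
  simpa [Fintype.sum_sum_type] using Real.sum_rpow_le_sum_rpow_of_sum_div_const_add_le ⟨hq₀, hq₁⟩
    hS'.eigenvalues_nonneg (y := Sum.elim hA'.isHermitian.eigenvalues hB'.isHermitian.eigenvalues)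
    (Sum.forall.mpr ⟨hA'.eigenvalues_nonneg, hB'.eigenvalues_nonneg⟩)
    (by simpa [Fintype.sum_sum_type] using hresolvent)

end Matrix

lemma schattenPowP_eq_re_trace_rpow {N : ℕ} (p : ℝ) (x : Matrix (Fin N) (Fin N) ℂ) :
    schattenPowP p x = ((xᴴ * x) ^ (p / 2)).trace.re := by
  rw [schattenPowP,
    CFC.rpow_eq_cfc_real (nonneg_iff_posSemidef.mpr (posSemidef_conjTranspose_mul_self x))]

theorem schatten_clarkson_general {N : ℕ} (p : ℝ) (hp₁ : 1 ≤ p) (hp₂ : p ≤ 2)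
    (a b : Matrix (Fin N) (Fin N) ℂ) :
    (schattenPowP p (a - b) + schattenPowP p (a + b)) / 2 ≤
      schattenPowP p a + schattenPowP p b := by
  have hgram (x : Matrix (Fin N) (Fin N) ℂ) : 0 ≤ xᴴ * x :=
    nonneg_iff_posSemidef.mpr (posSemidef_conjTranspose_mul_self x)
  have hparallelogram : (2⁻¹ : ℝ) • ((a - b)ᴴ * (a - b)) + (2⁻¹ : ℝ) • ((a + b)ᴴ * (a + b)) =
      aᴴ * a + bᴴ * b := by
    have h : (a - b)ᴴ * (a - b) + (a + b)ᴴ * (a + b) = (2 : ℝ) • (aᴴ * a + bᴴ * b) := by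
      rw [conjTranspose_sub, conjTranspose_add, two_smul]
      noncomm_ring
    rw [← smul_add, h, smul_smul, inv_mul_cancel₀ two_ne_zero, one_smul]
  have hconcave := (concaveOn_re_trace_rpow (n := Fin N) (q := p / 2) ⟨by linarith, by linarith⟩).2
    (hgram (a - b)) (hgram (a + b)) (by norm_num : (0 : ℝ) ≤ 2⁻¹) (by norm_num : (0 : ℝ) ≤ 2⁻¹)
    (by norm_num : (2⁻¹ : ℝ) + 2⁻¹ = 1)
  have hsubadd := re_trace_rpow_add_le (hgram a) (hgram b) (q := p / 2) (by linarith) (by linarith)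
  rw [hparallelogram, smul_eq_mul, smul_eq_mul] at hconcave
  simp only [schattenPowP_eq_re_trace_rpow]
  linarith

/-- The Clarkson-type inequality for Schatten `p`-classes, `1 ≤ p ≤ 2`:
`(‖a - b‖_p^p + ‖a + b‖_p^p)/2 ≤ ‖a‖_p^p + ‖b‖_p^p`. -/
theorem schatten_clarkson {N : ℕ} (hN : 1 ≤ N) (p : ℝ) (hp₁ : 1 ≤ p) (hp₂ : p ≤ 2)
    (a b : Matrix (Fin N) (Fin N) ℂ) :
    (schattenPowP p (a - b) + schattenPowP p (a + b)) / 2 ≤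
      schattenPowP p a + schattenPowP p b :=
  schatten_clarkson_general p hp₁ hp₂ a b
end

section
/- Let n ≥ 1, let S be a Hermitian complex n×n matrix, and let ε : {1,…,n} → ℂ satisfy |ε_i| = 1 for all i. Let E_{ii} denote the matrix unit with 1 in entry (i,i) and 0 elsewhere, and put y = Σ_i ε_i · E_{ii} S. Then yᴴ y = S², and moreover Σ_i (E_{ii} S)(E_{ii} S)ᴴ equals the diagonal matrix whose i-th diagonal entry is (S²)_{ii}. -/
/-!
The matrix `y` is `diagonal ε * S`, and `diagonal ε` is unitary when every `|ε i| = 1`, so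
`yᴴ y = Sᴴ S = S²`.
-/

open Matrix

namespace Matrix

variable {m n α : Type*} [Fintype m] [DecidableEq m]

theorem sum_smul_single_mul [Semiring α] (d : m → α) (A : Matrix m n α) :
    ∑ i, d i • (single i i (1 : α) * A) = diagonal d * A := by
  rw [← sum_single_eq_diagonal, Matrix.sum_mul]
  congr! 1 with i
  rw [← smul_mul, smul_single, smul_eq_mul, mul_one]

theorem conjTranspose_mul_self_diagonal_mul [Semiring α] [StarRing α] (d : m → α)
    (hd : ∀ i, star (d i) * d i = 1) (A : Matrix m n α) :
    (diagonal d * A)ᴴ * (diagonal d * A) = Aᴴ * A := by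
  have hunit : (diagonal d)ᴴ * diagonal d = 1 := by
    simp [diagonal_conjTranspose, diagonal_mul_diagonal, hd]
  rw [conjTranspose_mul, Matrix.mul_assoc, ← Matrix.mul_assoc (diagonal d)ᴴ, hunit,
    Matrix.one_mul]

variable [Fintype n]

theorem single_mul_mul_conjTranspose_single_mul [Semiring α] [StarRing α] (i : m)
    (A : Matrix m n α) :
    (single i i (1 : α) * A) * (single i i (1 : α) * A)ᴴ = single i i ((A * Aᴴ) i i) := by
  rw [conjTranspose_mul, conjTranspose_single, star_one, Matrix.mul_assoc,
    ← Matrix.mul_assoc A Aᴴ, ← Matrix.mul_assoc, single_mul_mul_single, one_mul, mul_one]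

theorem sum_single_mul_mul_conjTranspose_single_mul [Semiring α] [StarRing α]
    (A : Matrix m n α) :
    ∑ i : m, (single i i (1 : α) * A) * (single i i (1 : α) * A)ᴴ =
      diagonal fun i => (A * Aᴴ) i i := by
  simp_rw [single_mul_mul_conjTranspose_single_mul, sum_single_eq_diagonal]

end Matrix

theorem schurHorn_row_column_computation_general {n : ℕ}
    (S : Matrix (Fin n) (Fin n) ℂ) (hS : S.IsHermitian)
    (ε : Fin n → ℂ) (hε : ∀ i, ‖ε i‖ = 1) :
    (∑ i, ε i • (single i i (1 : ℂ) * S))ᴴ *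
        (∑ i, ε i • (single i i (1 : ℂ) * S)) = S * S ∧
      (∑ i, (single i i (1 : ℂ) * S) * (single i i (1 : ℂ) * S)ᴴ) =
        Matrix.diagonal (fun i => (S * S) i i) := by
  have hε_unit : ∀ i, star (ε i) * ε i = 1 := fun i => by
    rw [RCLike.star_def, RCLike.conj_mul, hε, RCLike.ofReal_one, one_pow]
  constructor
  · rw [sum_smul_single_mul, conjTranspose_mul_self_diagonal_mul ε hε_unit, hS.eq]
  · rw [sum_single_mul_mul_conjTranspose_single_mul, hS.eq]

/-- For a Hermitian matrix `S` and unimodular scalars `ε_i`, the matrix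
`y = Σ_i ε_i E_{ii} S` satisfies `yᴴ y = S²`, and `Σ_i (E_{ii} S)(E_{ii} S)ᴴ` is the
diagonal matrix with entries the diagonal of `S²`. -/
theorem schurHorn_row_column_computation {n : ℕ} (hn : 1 ≤ n)
    (S : Matrix (Fin n) (Fin n) ℂ) (hS : S.IsHermitian)
    (ε : Fin n → ℂ) (hε : ∀ i, ‖ε i‖ = 1) :
    (∑ i, ε i • (single i i (1 : ℂ) * S))ᴴ *
        (∑ i, ε i • (single i i (1 : ℂ) * S)) = S * S ∧
      (∑ i, (single i i (1 : ℂ) * S) * (single i i (1 : ℂ) * S)ᴴ) =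
        Matrix.diagonal (fun i => (S * S) i i) :=
  schurHorn_row_column_computation_general S hS ε hε
end
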